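/- arXiv:1502.07736 — 2 statements merged into one kernel-verified Lean document; each statement's English description precedes it below -/
import Mathlib

section
/- For every finite graph G there exist two disjoint sets of vertices U, W ⊆ V(G) with |U| = |W| such that G has no edges between U and W and the induced subgraph of G on V(G) \ (U ∪ W) has a Hamilton path (where by convention the empty graph and a one-vertex graph have a Hamilton path). -/
open SimpleGraph

namespace MonoCyclePartitions

variable {V : Type*}

/-- `conCount H l x y` is the number of paths of length `l + 1` (equivalently, with `l`
internal vertices) between `x` and `y` in the graph `H`. -/
noncomputable def conCount (H : SimpleGraph V) (l : ℕ) (x y : V) : ℕ :=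
  Nat.card {p : H.Walk x y // p.IsPath ∧ p.length = l + 1}

/-- The bipartite graph consisting of the edges of `H` with one end in `X` and the other in `Y`. -/
def between (H : SimpleGraph V) (X Y : Set V) : SimpleGraph V where
  Adj u v := H.Adj u v ∧ ((u ∈ X ∧ v ∈ Y) ∨ (u ∈ Y ∧ v ∈ X))
  symm := ⟨fun u v h => ⟨h.1.symm, by tauto⟩⟩
  loopless := ⟨fun v h => H.irrefl h.1⟩

/-- A subgraph `F` of a graph `G` on `n` vertices is `(α, k)`-strongly robust if there is a
positive integer `l ≤ k` such that every two vertices of `F` are joined by at least `α * n ^ l`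
paths of length `l + 1` in `F`. -/
def StronglyRobust [Fintype V] {G : SimpleGraph V} (F : G.Subgraph) (α : ℝ) (k : ℕ) : Prop :=
  ∃ l : ℕ, 1 ≤ l ∧ l ≤ k ∧ ∀ x ∈ F.verts, ∀ y ∈ F.verts,
    α * (Fintype.card V : ℝ) ^ l ≤ (conCount F.spanningCoe l x y : ℝ)

/-- `F` is `(α, k)`-weakly robust, witnessed by the bipartition `{X, Y}` of its vertex set. -/
def WeaklyRobustWith [Fintype V] {G : SimpleGraph V} (F : G.Subgraph) (X Y : Set V)
    (α : ℝ) (k : ℕ) : Prop :=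
  X ∪ Y = F.verts ∧ Disjoint X Y ∧
  ∃ l : ℕ, 1 ≤ l ∧ l ≤ k ∧ ∀ x ∈ X, ∀ y ∈ Y,
    α * (Fintype.card V : ℝ) ^ l ≤ (conCount (between F.spanningCoe X Y) l x y : ℝ)

def WeaklyRobust [Fintype V] {G : SimpleGraph V} (F : G.Subgraph) (α : ℝ) (k : ℕ) : Prop :=
  ∃ X Y : Set V, WeaklyRobustWith F X Y α k

def Robust [Fintype V] {G : SimpleGraph V} (F : G.Subgraph) (α : ℝ) (k : ℕ) : Prop :=
  StronglyRobust F α k ∨ WeaklyRobust F α k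

/-- `F` is a subgraph of the graph `H` (as graphs on the same vertex type). -/
def SubgraphOf {G : SimpleGraph V} (F : G.Subgraph) (H : SimpleGraph V) : Prop :=
  ∀ ⦃u v⦄, F.Adj u v → H.Adj u v

/-- The subgraph of `G` consisting of the edges of `H` (that lie in `G`) inside the set `S`;
when `H ≤ G` this is the graph `H` restricted to `S`, viewed as a subgraph of `G`. -/
def restrictSubgraph (G H : SimpleGraph V) (S : Set V) : G.Subgraph where
  verts := S
  Adj u v := H.Adj u v ∧ G.Adj u v ∧ u ∈ S ∧ v ∈ S
  adj_sub h := h.2.1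
  edge_vert h := h.2.2.1
  symm := ⟨fun u v h => ⟨h.1.symm, h.2.1.symm, h.2.2.2, h.2.2.1⟩⟩

/-- The graph `H` restricted to `S` has a Hamilton cycle, where by convention the empty set,
a single vertex and an edge count as (degenerate) cycles. -/
def HasDegenHamCycleOn [DecidableEq V] (H : SimpleGraph V) (S : Set V) : Prop :=
  S = ∅ ∨ (∃ v, S = {v}) ∨ (∃ u v, H.Adj u v ∧ S = {u, v}) ∨
    ∃ (x : S) (c : (H.induce S).Walk x x), c.IsHamiltonianCycle

/-- The vertex set can be partitioned into a cycle of `GR` and a cycle of `GB`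
(allowing degenerate cycles). -/
def RedBlueCyclePartition [DecidableEq V] (GR GB : SimpleGraph V) : Prop :=
  ∃ VR VB : Set V, Disjoint VR VB ∧ VR ∪ VB = Set.univ ∧
    HasDegenHamCycleOn GR VR ∧ HasDegenHamCycleOn GB VB

/-- The induced subgraph of `H` on `S` has a Hamilton path (with the convention that the
empty graph and one-vertex graphs have one). -/
def HasHamPathOn [DecidableEq V] (H : SimpleGraph V) (S : Set V) : Prop :=
  S = ∅ ∨ ∃ (a b : S) (p : (H.induce S).Walk a b), p.IsHamiltonian

/-- The number of neighbours of `v` in `A`, in the graph `H`. -/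
noncomputable def degIn (H : SimpleGraph V) (v : V) (A : Set V) : ℕ :=
  (H.neighborSet v ∩ A).ncard

/-- The degree of `v` in the graph `H`. -/
noncomputable def deg (H : SimpleGraph V) (v : V) : ℕ :=
  (H.neighborSet v).ncard

/-- The number of edges of `H` with one end in `A` and the other in `B`. -/
noncomputable def edgesBetween (H : SimpleGraph V) (A B : Set V) : ℕ :=
  {e ∈ H.edgeSet | ∃ u v, u ∈ A ∧ v ∈ B ∧ e = s(u, v)}.ncard

/-- The number of edges of `H` with both ends in `A`. -/
noncomputable def edgesWithin (H : SimpleGraph V) (A : Set V) : ℕ :=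
  {e ∈ H.edgeSet | ∀ v ∈ e, v ∈ A}.ncard

/-- `A` is an independent set of `H`. -/
def IsIndep (H : SimpleGraph V) (A : Set V) : Prop :=
  ∀ u ∈ A, ∀ v ∈ A, ¬ H.Adj u v

/-- The set of vertices with a neighbour in `A`. -/
def NSet (H : SimpleGraph V) (A : Set V) : Set V :=
  {v | ∃ u ∈ A, H.Adj u v}

/-- `H` is 2-connected: it is connected, has at least 3 vertices, and stays connected after
deleting any single vertex. -/
def TwoConnected [Fintype V] (H : SimpleGraph V) : Prop :=
  H.Connected ∧ 3 ≤ Fintype.card V ∧ ∀ v : V, (H.induce ({v}ᶜ : Set V)).Connected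

/-! Run depth-first search, keeping the set `U` of unvisited vertices, the set `W` of finished
vertices and the stack, which is always a path of `G`. A vertex is finished only once it has no
unvisited neighbour, so there is never an edge between `U` and `W`. Every step moves one vertex
either from `U` onto the stack or from the stack into `W`, so `|U| - |W|` drops by exactly one per
step, starting from `|V|`. Hence it reaches `0`, and at that moment the stack is a Hamilton path of
the remaining vertices. -/

theorem hasHamPathOn_of_isChain [DecidableEq V] {G : SimpleGraph V} {l : List V}
    (hnodup : l.Nodup) (hchain : l.IsChain G.Adj) : HasHamPathOn G {v | v ∈ l} := by
  rcases eq_or_ne l [] with rfl | hne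
  · exact Or.inl (by simp)
  let p := (Walk.ofSupport l hne hchain).induce {v | v ∈ l} (by simp)
  refine Or.inr ⟨_, _, p, (Walk.IsPath.mk' ?_).isHamiltonian_of_mem fun v => ?_⟩
  · simp only [p, Walk.support_induce, Walk.support_ofSupport]
    exact .of_map Subtype.val (by rwa [List.attachWith_map_subtype_val])
  · simp only [p, Walk.support_induce, Walk.support_ofSupport]
    exact (List.mem_attachWith _ v).2 v.2

structure DfsState (G : SimpleGraph V) where
  unvisited : Finset V
  finished : Finset V
  stack : List V
  disjoint : Disjoint unvisited finished
  mem_stack : ∀ v, v ∈ stack ↔ v ∉ unvisited ∧ v ∉ finished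
  nodup : stack.Nodup
  isChain : stack.IsChain G.Adj
  not_adj : ∀ u ∈ unvisited, ∀ w ∈ finished, ¬ G.Adj u w

namespace DfsState

variable {G : SimpleGraph V}

def imbalance (s : DfsState G) : ℤ := s.unvisited.card - s.finished.card

def init [Fintype V] : DfsState G where
  unvisited := Finset.univ
  finished := ∅
  stack := []
  disjoint := Finset.disjoint_empty_right _
  mem_stack := by simp
  nodup := List.nodup_nil
  isChain := List.isChain_nil
  not_adj := by simp

variable [DecidableEq V]

def push (s : DfsState G) (u : V) (hu : u ∈ s.unvisited)
    (hadj : ∀ v ∈ s.stack.head?, G.Adj u v) : DfsState G where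
  unvisited := s.unvisited.erase u
  finished := s.finished
  stack := u :: s.stack
  disjoint := s.disjoint.mono_left (Finset.erase_subset _ _)
  mem_stack v := by
    by_cases hv : v = u
    · subst hv
      simp [hu, Finset.disjoint_left.1 s.disjoint hu]
    · simp [hv, s.mem_stack]
  nodup := List.nodup_cons.2 ⟨fun h => ((s.mem_stack u).1 h).1 hu, s.nodup⟩
  isChain := List.isChain_cons.2 ⟨hadj, s.isChain⟩
  not_adj _ hu' := s.not_adj _ (Finset.mem_of_mem_erase hu')

def pop (s : DfsState G) (v : V) (rest : List V) (hs : s.stack = v :: rest)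
    (hv : ∀ u ∈ s.unvisited, ¬ G.Adj u v) : DfsState G where
  unvisited := s.unvisited
  finished := insert v s.finished
  stack := rest
  disjoint := Finset.disjoint_insert_right.2
    ⟨((s.mem_stack v).1 (hs ▸ List.mem_cons_self)).1, s.disjoint⟩
  mem_stack x := by
    have hnodup := hs ▸ s.nodup
    have hx_mem := s.mem_stack x
    rw [hs, List.mem_cons] at hx_mem
    by_cases hx : x = v
    · subst hx
      simp [(List.nodup_cons.1 hnodup).1]
    · simp [hx, ← hx_mem]
  nodup := (List.nodup_cons.1 (hs ▸ s.nodup)).2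
  isChain := (hs ▸ s.isChain).tail
  not_adj u hu w hw := by
    rcases Finset.mem_insert.1 hw with rfl | hw
    · exact hv u hu
    · exact s.not_adj u hu w hw

theorem imbalance_push (s : DfsState G) (u : V) (hu : u ∈ s.unvisited)
    (hadj : ∀ v ∈ s.stack.head?, G.Adj u v) : (s.push u hu hadj).imbalance + 1 = s.imbalance := by
  simp only [imbalance, push, Finset.card_erase_of_mem hu]
  have hpos := Finset.card_pos.2 ⟨u, hu⟩
  omega

theorem imbalance_pop (s : DfsState G) (v : V) (rest : List V) (hs : s.stack = v :: rest)
    (hv : ∀ u ∈ s.unvisited, ¬ G.Adj u v) : (s.pop v rest hs hv).imbalance + 1 = s.imbalance := by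
  have hvW : v ∉ s.finished := ((s.mem_stack v).1 (hs ▸ List.mem_cons_self)).2
  simp only [imbalance, pop, Finset.card_insert_of_notMem hvW]
  omega

theorem exists_imbalance_add_one_eq (s : DfsState G) (h : s.unvisited.Nonempty) :
    ∃ t : DfsState G, t.imbalance + 1 = s.imbalance := by
  by_cases hpush : ∃ u ∈ s.unvisited, ∀ v ∈ s.stack.head?, G.Adj u v
  · obtain ⟨u, hu, hadj⟩ := hpush
    exact ⟨_, s.imbalance_push u hu hadj⟩
  push Not at hpush
  obtain ⟨u, hu⟩ := h
  obtain ⟨v, hv, -⟩ := hpush u hu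
  obtain ⟨rest, hs⟩ : ∃ rest, s.stack = v :: rest := ⟨s.stack.tail, List.eq_cons_of_mem_head? hv⟩
  refine ⟨_, s.imbalance_pop v rest hs fun u hu hadj => ?_⟩
  obtain ⟨v', hv', hnadj⟩ := hpush u hu
  rw [hs, List.head?_cons, Option.mem_some_iff] at hv'
  exact hnadj (hv' ▸ hadj)

theorem exists_imbalance_eq_zero (s : DfsState G) (h : 0 ≤ s.imbalance) :
    ∃ t : DfsState G, t.imbalance = 0 := by
  lift s.imbalance to ℕ using h with n hn
  induction n generalizing s with
  | zero => exact ⟨s, hn.symm⟩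
  | succ n ih =>
    have hne : s.unvisited.Nonempty := by
      rw [← Finset.card_pos]
      simp only [imbalance] at hn
      omega
    obtain ⟨t, ht⟩ := s.exists_imbalance_add_one_eq hne
    exact ih t (by omega)

theorem hasHamPathOn_compl (s : DfsState G) :
    HasHamPathOn G ((s.unvisited ∪ s.finished : Set V)ᶜ) := by
  convert hasHamPathOn_of_isChain s.nodup s.isChain using 1
  ext v
  simp [s.mem_stack]

end DfsState

theorem statement_5 {V : Type*} [Fintype V] [DecidableEq V] (G : SimpleGraph V) :
    ∃ U W : Set V, Disjoint U W ∧ U.ncard = W.ncard ∧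
      (∀ u ∈ U, ∀ w ∈ W, ¬ G.Adj u w) ∧
      HasHamPathOn G ((U ∪ W)ᶜ) := by
  obtain ⟨s, hs⟩ := (DfsState.init (G := G)).exists_imbalance_eq_zero
    (by simp [DfsState.imbalance, DfsState.init])
  refine ⟨s.unvisited, s.finished, Finset.disjoint_coe.2 s.disjoint, ?_, s.not_adj,
    s.hasHamPathOn_compl⟩
  simp only [DfsState.imbalance] at hs
  simp only [Set.ncard_coe_finset]
  omega

end MonoCyclePartitions
end

section
/- Let 0 < eps < 1/4 and let G be a balanced bipartite graph on n vertices with bipartition {X1, X2} (so |X1| = |X2| = n/2) with minimum degree delta(G) >= (1/4 - eps)*n. Then either G contains a perfect matching, or there exist subsets A1 ⊆ X1 and A2 ⊆ X2 with (1/4 - eps)*n <= |A1|, |A2| <= (1/4 + eps)*n such that G has no edges between A1 and A2. -/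
open SimpleGraph

namespace MonoCyclePartitions

variable {V : Type*}

/-! If `G` has no perfect matching, Hall's theorem yields a set `S` on one side whose
neighbourhood `N(S)` is smaller than `S`; take `A₁ = S` and `A₂ = X₂ \ N(S)`, which have no
edges between them. Let `δ = (1/4 - ε) n`. Any `u ∈ S` has all its neighbours in `N(S)`, so
`δ ≤ |N(S)| < |S|`, and any `v ∈ A₂` (there is one, as `|N(S)| < |S| ≤ |X₁| = |X₂|`) has all
its neighbours in `X₁ \ S`, so `δ ≤ |X₁| - |S|`. These two inequalities bound both `|A₁|` and
`|A₂|` between `δ` and `n/2 - δ`. -/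

section Deficiency

variable {G : SimpleGraph V} {X1 X2 S T : Set V}

theorem mem_NSet {v : V} : v ∈ NSet G S ↔ ∃ u ∈ S, G.Adj u v := Iff.rfl

theorem NSet_eq_biUnion_neighborSet : NSet G S = ⋃ u ∈ S, G.neighborSet u := by
  ext v
  simp [mem_NSet]

theorem NSet_mono (h : S ⊆ T) : NSet G S ⊆ NSet G T :=
  fun _ ⟨u, hu, huv⟩ => ⟨u, h hu, huv⟩

theorem neighborSet_subset_NSet {u : V} (hu : u ∈ S) : G.neighborSet u ⊆ NSet G S :=
  fun _ huv => ⟨u, hu, huv⟩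

theorem not_adj_of_notMem_NSet {u v : V} (hu : u ∈ S) (hv : v ∉ NSet G S) : ¬ G.Adj u v :=
  fun huv => hv ⟨u, hu, huv⟩

theorem NSet_subset_of_isBipartiteWith (h : G.IsBipartiteWith X1 X2) (hS : S ⊆ X1) :
    NSet G S ⊆ X2 :=
  fun _ ⟨_, hu, huv⟩ => h.mem_of_mem_adj (hS hu) huv

theorem neighborSet_subset_sdiff_of_notMem_NSet (h : G.IsBipartiteWith X1 X2) {v : V}
    (hv : v ∈ X2) (hvS : v ∉ NSet G S) : G.neighborSet v ⊆ X1 \ S :=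
  fun _ hvw => ⟨h.symm.mem_of_mem_adj hv hvw, fun hw => not_adj_of_notMem_NSet hw hvS hvw.symm⟩

theorem exists_ncard_NSet_lt_of_not_exists_isPerfectMatching [Finite V]
    (h : G.IsBipartiteWith X1 X2) (hcover : X1 ∪ X2 = Set.univ)
    (hM : ¬ ∃ M : G.Subgraph, M.IsPerfectMatching) :
    ∃ S, (S ⊆ X1 ∨ S ⊆ X2) ∧ (NSet G S).ncard < S.ncard := by
  classical
  have := Fintype.ofFinite V
  obtain ⟨s, hs⟩ : ∃ s : Set V, (NSet G s).ncard < s.ncard := by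
    by_contra! hall
    simp only [NSet_eq_biUnion_neighborSet] at hall
    exact hM (exists_isPerfectMatching_of_forall_ncard_le h hall)
  by_contra! hS
  have hsplit : (s ∩ X1).ncard + (s ∩ X2).ncard = s.ncard := by
    rw [← Set.ncard_union_eq (h.disjoint.mono Set.inter_subset_right Set.inter_subset_right),
      ← Set.inter_union_distrib_left, hcover, Set.inter_univ]
  have hN : (NSet G (s ∩ X1)).ncard + (NSet G (s ∩ X2)).ncard ≤ (NSet G s).ncard := by
    rw [← Set.ncard_union_eq (h.disjoint.symm.mono
      (NSet_subset_of_isBipartiteWith h Set.inter_subset_right)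
      (NSet_subset_of_isBipartiteWith h.symm Set.inter_subset_right))]
    exact Set.ncard_le_ncard
      (Set.union_subset (NSet_mono Set.inter_subset_left) (NSet_mono Set.inter_subset_left))
  have h1 := hS (s ∩ X1) (Or.inl Set.inter_subset_right)
  have h2 := hS (s ∩ X2) (Or.inr Set.inter_subset_right)
  omega

theorem ncard_bounds_of_ncard_NSet_lt [Finite V] {δ : ℝ} (h : G.IsBipartiteWith X1 X2)
    (hbal : X1.ncard = X2.ncard) (hdeg : ∀ v, δ ≤ deg G v) (hS : S ⊆ X1)
    (hdef : (NSet G S).ncard < S.ncard) :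
    δ ≤ S.ncard ∧ S.ncard + δ ≤ X1.ncard ∧
      δ ≤ (X2 \ NSet G S).ncard ∧ (X2 \ NSet G S).ncard + δ ≤ X2.ncard := by
  have hNX2 := NSet_subset_of_isBipartiteWith h hS
  have hX1 := Set.ncard_sdiff_add_ncard_of_subset hS
  have hX2 := Set.ncard_sdiff_add_ncard_of_subset hNX2
  obtain ⟨u, hu⟩ : S.Nonempty := Set.nonempty_of_ncard_ne_zero (by omega)
  obtain ⟨v, hv⟩ : (X2 \ NSet G S).Nonempty := by
    have := Set.ncard_le_ncard hS
    exact Set.nonempty_of_ncard_ne_zero (by omega)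
  have hu_deg : deg G u ≤ (NSet G S).ncard :=
    Set.ncard_le_ncard (neighborSet_subset_NSet hu)
  have hv_deg : deg G v ≤ (X1 \ S).ncard :=
    Set.ncard_le_ncard (neighborSet_subset_sdiff_of_notMem_NSet h hv.1 hv.2)
  have hδu := (hdeg u).trans (Nat.cast_le.mpr hu_deg)
  have hδv := (hdeg v).trans (Nat.cast_le.mpr hv_deg)
  have hdefR : ((NSet G S).ncard : ℝ) + 1 ≤ S.ncard := by exact_mod_cast hdef
  have hX1R : ((X1 \ S).ncard : ℝ) + S.ncard = X1.ncard := by exact_mod_cast hX1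
  have hX2R : ((X2 \ NSet G S).ncard : ℝ) + (NSet G S).ncard = X2.ncard := by exact_mod_cast hX2
  have hbalR : (X1.ncard : ℝ) = X2.ncard := by exact_mod_cast hbal
  exact ⟨by linarith, by linarith, by linarith, by linarith⟩

end Deficiency

theorem statement_9_general (eps : ℝ)
    (n : ℕ) (G : SimpleGraph (Fin n)) (X1 X2 : Set (Fin n))
    (hdisj : Disjoint X1 X2) (hcover : X1 ∪ X2 = Set.univ) (hbal : X1.ncard = X2.ncard)
    (hbip : ∀ u v, G.Adj u v → (u ∈ X1 ∧ v ∈ X2) ∨ (u ∈ X2 ∧ v ∈ X1))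
    (hdeg : ∀ v, (1 / 4 - eps) * n ≤ (deg G v : ℝ)) :
    (∃ M : G.Subgraph, M.IsPerfectMatching) ∨
      ∃ A1 ⊆ X1, ∃ A2 ⊆ X2,
        (1 / 4 - eps) * n ≤ (A1.ncard : ℝ) ∧ (A1.ncard : ℝ) ≤ (1 / 4 + eps) * n ∧
        (1 / 4 - eps) * n ≤ (A2.ncard : ℝ) ∧ (A2.ncard : ℝ) ≤ (1 / 4 + eps) * n ∧
        ∀ u ∈ A1, ∀ v ∈ A2, ¬ G.Adj u v := by
  have h : G.IsBipartiteWith X1 X2 := ⟨hdisj, hbip⟩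
  have hsum : (X1.ncard : ℝ) + X2.ncard = n := by
    rw [← Nat.cast_add, ← Set.ncard_union_eq hdisj, hcover, Set.ncard_univ, Nat.card_fin]
  have hbalR : (X1.ncard : ℝ) = X2.ncard := by exact_mod_cast hbal
  by_cases hM : ∃ M : G.Subgraph, M.IsPerfectMatching
  · exact Or.inl hM
  right
  obtain ⟨S, hS1 | hS2, hdef⟩ :=
    exists_ncard_NSet_lt_of_not_exists_isPerfectMatching h hcover hM
  · obtain ⟨h1, h2, h3, h4⟩ := ncard_bounds_of_ncard_NSet_lt h hbal hdeg hS1 hdef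
    exact ⟨S, hS1, X2 \ NSet G S, Set.sdiff_subset, h1, by linarith, h3, by linarith,
      fun u hu v hv => not_adj_of_notMem_NSet hu hv.2⟩
  · obtain ⟨h1, h2, h3, h4⟩ := ncard_bounds_of_ncard_NSet_lt h.symm hbal.symm hdeg hS2 hdef
    exact ⟨X1 \ NSet G S, Set.sdiff_subset, S, hS2, h3, by linarith, h1, by linarith,
      fun u hu v hv huv => not_adj_of_notMem_NSet hv hu.2 huv.symm⟩

theorem statement_9 (eps : ℝ) (heps0 : 0 < eps) (heps1 : eps < 1 / 4)
    (n : ℕ) (G : SimpleGraph (Fin n)) (X1 X2 : Set (Fin n))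
    (hdisj : Disjoint X1 X2) (hcover : X1 ∪ X2 = Set.univ) (hbal : X1.ncard = X2.ncard)
    (hbip : ∀ u v, G.Adj u v → (u ∈ X1 ∧ v ∈ X2) ∨ (u ∈ X2 ∧ v ∈ X1))
    (hdeg : ∀ v, (1 / 4 - eps) * n ≤ (deg G v : ℝ)) :
    (∃ M : G.Subgraph, M.IsPerfectMatching) ∨
      ∃ A1 ⊆ X1, ∃ A2 ⊆ X2,
        (1 / 4 - eps) * n ≤ (A1.ncard : ℝ) ∧ (A1.ncard : ℝ) ≤ (1 / 4 + eps) * n ∧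
        (1 / 4 - eps) * n ≤ (A2.ncard : ℝ) ∧ (A2.ncard : ℝ) ≤ (1 / 4 + eps) * n ∧
        ∀ u ∈ A1, ∀ v ∈ A2, ¬ G.Adj u v :=
  statement_9_general eps n G X1 X2 hdisj hcover hbal hbip hdeg

end MonoCyclePartitions
end
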